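/- Let n ≥ 3 and let φ₂(ξ) = ξ₁|ξ|² for ξ ∈ ℝⁿ, so that ∇φ₂(ξ) = (|ξ|² + 2ξ₁², 2ξ₁ξ₂, …, 2ξ₁ξₙ). There exist constants c > 0 and ε ∈ (0,1], depending only on n, such that for every k ∈ ℕ and all ξ₁, ξ₂, ξ₃ ∈ ℤⁿ satisfying ξ₁ + ξ₂ + ξ₃ = 0, 2^{k−1} ≤ |ξ_i| ≤ 2^{k+1} for i = 1, 2, 3, and 1 ≤ |ξ_{i1}| ≤ ε 2^k for i = 1, 2, 3 (where ξ_{i1} is the first coordinate of ξ_i), there exist indices i, j ∈ {1,2,3} with |∇φ₂(ξ_i) − ∇φ₂(ξ_j)| ≥ c · 2^k. -/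
import Mathlib

/-- Euclidean norm of a real vector indexed by `Fin n`. -/
noncomputable def eucNorm {n : ℕ} (v : Fin n → ℝ) : ℝ :=
  Real.sqrt (∑ i, (v i) ^ 2)

/-- The gradient of the Zakharov-Kuznetsov dispersion relation `φ₂(ξ) = ξ₁|ξ|²`
at a lattice point `ξ ∈ ℤⁿ`: the first component is `|ξ|² + 2ξ₁²`, and the `i`-th
component (for `i ≥ 2`) is `2 ξ₁ ξ_i`. -/
noncomputable def zkGrad {n : ℕ} (h : 0 < n) (ξ : Fin n → ℤ) : Fin n → ℝ :=
  fun i =>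
    if (i : ℕ) = 0 then (∑ j, ((ξ j : ℝ)) ^ 2) + 2 * ((ξ ⟨0, h⟩ : ℝ)) ^ 2
    else 2 * ((ξ ⟨0, h⟩ : ℝ)) * (ξ i : ℝ)

lemma abs_le_eucNorm {n : ℕ} (v : Fin n → ℝ) (i : Fin n) : |v i| ≤ eucNorm v := by
  rw [eucNorm, ← Real.sqrt_sq_eq_abs]
  exact Real.sqrt_le_sqrt
    (Finset.single_le_sum (f := fun j => v j ^ 2) (fun j _ => sq_nonneg _) (Finset.mem_univ i))

set_option maxHeartbeats 1000000 in
/-- Transversality for the periodic Zakharov-Kuznetsov dispersion relation in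
dimension `n ≥ 3`: for lattice frequencies `ξ₁ + ξ₂ + ξ₃ = 0` of comparable size
`2^k` whose first components satisfy `1 ≤ |ξ_{i1}| ≤ ε 2^k`, two of the group
velocities differ by at least `c 2^k`. -/
theorem zk_transversality_periodic (n : ℕ) (hn : 3 ≤ n) :
    ∃ c > 0, ∃ ε : ℝ, 0 < ε ∧ ε ≤ 1 ∧
      ∀ k : ℕ, ∀ ξ : Fin 3 → (Fin n → ℤ),
        ξ 0 + ξ 1 + ξ 2 = 0 →
        (∀ i, (2:ℝ) ^ ((k : ℤ) - 1) ≤ eucNorm (fun j => ((ξ i j : ℝ))) ∧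
          eucNorm (fun j => ((ξ i j : ℝ))) ≤ (2:ℝ) ^ ((k : ℤ) + 1)) →
        (∀ i, 1 ≤ |((ξ i ⟨0, by omega⟩ : ℤ) : ℝ)| ∧
          |((ξ i ⟨0, by omega⟩ : ℤ) : ℝ)| ≤ ε * 2 ^ k) →
        ∃ i j : Fin 3, c * 2 ^ k ≤
          eucNorm (fun l => zkGrad (by omega) (ξ i) l - zkGrad (by omega) (ξ j) l) := by
  have h0 : 0 < n := by omega
  refine ⟨1/128, by norm_num, 1/16, by norm_num, by norm_num, ?_⟩
  intro k ξ hsum hnorm ha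
  set T : ℝ := 2^k with hTdef
  have hT1 : (1:ℝ) ≤ T := one_le_pow₀ (by norm_num)
  have hTpos : (0:ℝ) < T := by linarith
  set i0 : Fin n := ⟨0, h0⟩ with hi0
  set Nv : Fin 3 → ℝ := fun i => ∑ j, ((ξ i j : ℝ))^2 with hNv
  set a : Fin 3 → ℝ := fun i => ((ξ i i0 : ℝ)) with haa
  have hNnonneg : ∀ i, (0:ℝ) ≤ Nv i := fun i => Finset.sum_nonneg (fun j _ => sq_nonneg _)
  have e1 : (2:ℝ) ^ ((k : ℤ) - 1) = T / 2 := by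
    rw [zpow_sub₀ (by norm_num : (2:ℝ) ≠ 0), zpow_natCast, zpow_one, hTdef]
  have e2 : (2:ℝ) ^ ((k : ℤ) + 1) = 2 * T := by
    rw [zpow_add₀ (by norm_num : (2:ℝ) ≠ 0), zpow_natCast, zpow_one, hTdef]; ring
  have hNlb : ∀ i, T^2/4 ≤ Nv i := by
    intro i
    have h := (hnorm i).1
    rw [e1, eucNorm] at h
    have h2 := (Real.le_sqrt (by positivity) (hNnonneg i)).mp h
    nlinarith [h2]
  have ha2lb : ∀ i, 1 ≤ (a i)^2 := by
    intro i
    have h := (ha i).1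
    nlinarith [h, sq_abs (a i)]
  have ha2ub : ∀ i, (a i)^2 ≤ T^2/256 := by
    intro i
    have h := (ha i).2
    have h' : |a i| ≤ T/16 := by rw [hTdef]; exact le_of_le_of_eq h (by ring)
    nlinarith [sq_abs (a i), abs_nonneg (a i)]
  have hz : ∀ j, ((ξ 2 j : ℝ)) = -(((ξ 0 j : ℝ)) + ((ξ 1 j : ℝ))) := by
    intro j
    have h2 : ξ 0 j + ξ 1 j + ξ 2 j = 0 := congrFun hsum j
    have h3 : ((ξ 0 j + ξ 1 j + ξ 2 j : ℤ) : ℝ) = 0 := by rw [h2]; simp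
    push_cast at h3
    linarith
  set P : ℝ := ∑ j, ((ξ 0 j : ℝ)) * ((ξ 1 j : ℝ)) with hPdef
  have hP : Nv 2 = Nv 0 + Nv 1 + 2 * P := by
    rw [hNv]
    simp only
    rw [hPdef]
    calc ∑ j, ((ξ 2 j : ℝ))^2
        = ∑ j, (((ξ 0 j : ℝ))^2 + ((ξ 1 j : ℝ))^2 + 2 * (((ξ 0 j : ℝ)) * ((ξ 1 j : ℝ)))) := by
          refine Finset.sum_congr rfl (fun j _ => ?_)
          rw [hz j]; ring
      _ = _ := by
          rw [Finset.sum_add_distrib, Finset.sum_add_distrib, ← Finset.mul_sum]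
  -- case 1 helper
  have key1 : ∀ i j : Fin 3, T^2/64 ≤ |Nv i - Nv j| →
      1/128 * 2^k ≤ eucNorm (fun l => zkGrad h0 (ξ i) l - zkGrad h0 (ξ j) l) := by
    intro i j hij
    have hle := abs_le_eucNorm (fun l => zkGrad h0 (ξ i) l - zkGrad h0 (ξ j) l) i0
    have hval : zkGrad h0 (ξ i) i0 - zkGrad h0 (ξ j) i0
        = (Nv i - Nv j) + 2 * ((a i)^2 - (a j)^2) := by
      simp only [zkGrad, hi0, hNv, haa]
      norm_num
      ring
    have htri : |Nv i - Nv j| ≤ |zkGrad h0 (ξ i) i0 - zkGrad h0 (ξ j) i0|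
        + |2 * ((a i)^2 - (a j)^2)| := by
      have h' : Nv i - Nv j
          = (zkGrad h0 (ξ i) i0 - zkGrad h0 (ξ j) i0) - 2 * ((a i)^2 - (a j)^2) := by
        rw [hval]; ring
      rw [h']
      exact abs_sub _ _
    have hda : |2 * ((a i)^2 - (a j)^2)| ≤ T^2/128 := by
      rw [abs_le]
      constructor <;> nlinarith [ha2lb i, ha2lb j, ha2ub i, ha2ub j]
    have hT2 : T ≤ T^2 := by nlinarith
    calc (1:ℝ)/128 * 2^k = T/128 := by rw [hTdef]; ring
      _ ≤ |zkGrad h0 (ξ i) i0 - zkGrad h0 (ξ j) i0| := by linarith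
      _ ≤ _ := hle
  by_cases hc1 : T^2/64 ≤ |Nv 1 - Nv 0|
  · exact ⟨1, 0, key1 1 0 hc1⟩
  by_cases hc2 : T^2/64 ≤ |Nv 2 - Nv 0|
  · exact ⟨2, 0, key1 2 0 hc2⟩
  -- case 2 : use pair (0,1)
  push_neg at hc1 hc2
  rw [abs_lt] at hc1 hc2
  refine ⟨0, 1, ?_⟩
  suffices hS : 1/128 * (2:ℝ)^k ≤ eucNorm (fun l => zkGrad h0 (ξ 0) l - zkGrad h0 (ξ 1) l)
    from hS
  set w : Fin n → ℝ := fun l => zkGrad h0 (ξ 0) l - zkGrad h0 (ξ 1) l with hw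
  set u : Fin n → ℝ := fun l => 2 * a 0 * ((ξ 0 l : ℝ)) - 2 * a 1 * ((ξ 1 l : ℝ)) with hu
  have hwu : ∀ l ∈ Finset.univ.erase i0, u l ^ 2 = w l ^ 2 := by
    intro l hl
    have hl' : (l : ℕ) ≠ 0 := by
      intro h
      exact (Finset.ne_of_mem_erase hl) (by rw [hi0]; exact Fin.ext h)
    have : w l = u l := by
      simp only [hw, hu, zkGrad, hl', if_false, haa, hi0]
    rw [this]
  have h1 : ∑ l ∈ Finset.univ.erase i0, u l ^ 2 ≤ ∑ l, w l ^ 2 := by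
    calc ∑ l ∈ Finset.univ.erase i0, u l ^ 2
        = ∑ l ∈ Finset.univ.erase i0, w l ^ 2 := Finset.sum_congr rfl hwu
      _ ≤ ∑ l, w l ^ 2 :=
          Finset.sum_le_sum_of_subset_of_nonneg (Finset.erase_subset _ _)
            (fun l _ _ => sq_nonneg _)
  have h2 : ∑ l ∈ Finset.univ.erase i0, u l ^ 2 = (∑ l, u l ^ 2) - u i0 ^ 2 :=
    Finset.sum_erase_eq_sub (Finset.mem_univ i0)
  have hui0 : u i0 = 2 * (a 0)^2 - 2 * (a 1)^2 := by
    simp only [hu, haa]; ring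
  have husum : ∑ l, u l ^ 2
      = 4 * (a 0)^2 * Nv 0 + 4 * (a 1)^2 * Nv 1 - 8 * (a 0 * a 1) * P := by
    calc ∑ l, u l ^ 2
        = ∑ l, (4 * (a 0)^2 * ((ξ 0 l : ℝ))^2 + 4 * (a 1)^2 * ((ξ 1 l : ℝ))^2
            - 8 * (a 0 * a 1) * (((ξ 0 l : ℝ)) * ((ξ 1 l : ℝ)))) := by
          refine Finset.sum_congr rfl (fun l _ => ?_)
          simp only [hu]; ring
      _ = _ := by
          rw [Finset.sum_sub_distrib, Finset.sum_add_distrib, ← Finset.mul_sum, ← Finset.mul_sum,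
            ← Finset.mul_sum, hNv, hPdef]
  have h2P : 2 * P = Nv 2 - Nv 0 - Nv 1 := by linarith [hP]
  rw [eucNorm]
  rw [Real.le_sqrt (by positivity) (Finset.sum_nonneg (fun l _ => sq_nonneg _))]
  have hkey : (1/128 * (2:ℝ)^k)^2 ≤ (∑ l, u l ^ 2) - u i0 ^ 2 := by
    rw [husum, hui0, ← hTdef]
    have hr : 8 * (a 0 * a 1) * P = 4 * (a 0 * a 1) * (Nv 2 - Nv 0 - Nv 1) := by
      rw [← h2P]; ring
    rw [hr]
    nlinarith [mul_nonneg (sq_nonneg (a 0 + a 1)) (hNnonneg 0),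
      mul_nonneg (sq_nonneg (a 0)) (by linarith [hNlb 0] : (0:ℝ) ≤ Nv 0 - T^2/4),
      mul_nonneg (sq_nonneg (a 1)) (by linarith [hNlb 0] : (0:ℝ) ≤ Nv 0 - T^2/4),
      mul_nonneg (sq_nonneg (a 1)) (by linarith [hc1.1] : (0:ℝ) ≤ Nv 1 - Nv 0 + T^2/64),
      mul_nonneg (sq_nonneg (a 0 + a 1))
        (by linarith [hc1.1, hc2.2] : (0:ℝ) ≤ T^2/32 - (Nv 2 - Nv 1)),
      mul_nonneg (sq_nonneg (a 0 - a 1))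
        (by linarith [hc1.2, hc2.1] : (0:ℝ) ≤ T^2/32 + (Nv 2 - Nv 1)),
      mul_nonneg (by nlinarith [ha2ub 0, ha2lb 1] : (0:ℝ) ≤ T^2/256 - ((a 0)^2 - (a 1)^2))
        (by positivity : (0:ℝ) ≤ 2 * (a 0)^2),
      mul_nonneg (by nlinarith [ha2ub 1, ha2lb 0] : (0:ℝ) ≤ T^2/256 + ((a 0)^2 - (a 1)^2))
        (by positivity : (0:ℝ) ≤ 2 * (a 1)^2),
      ha2lb 0, ha2lb 1, sq_nonneg T, hTpos]
  calc (1/128 * (2:ℝ)^k)^2 ≤ ∑ l ∈ Finset.univ.erase i0, u l ^ 2 := by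
        rw [h2]; exact hkey
    _ ≤ ∑ l, w l ^ 2 := h1
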